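/- For every decorated planar rooted forest F ∈ ℱ(X,Ω), Δ_λ(F) = Σ λ^{|I∩J|} F_I ⊗ F_J, where the sum runs over all pairs of subsets I, J ⊆ V(F) with I ∪ J = V(F) and I ∩ J ⊆ V_X(F). In particular, for λ = 0, Δ(F) = Σ_{I ⊆ V(F)} F_I ⊗ F_{V(F)∖I}. -/

import Mathlib

open scoped TensorProduct

universe u v w u'

/-- Decorated planar rooted trees: internal vertices are decorated by `Ω`,
leaves are decorated by `X ⊔ Ω` (a leaf decorated by `ω : Ω` is `node ω []`). -/
inductive PTree (X : Type u) (Ω : Type v) : Type (max u v)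
  | leafX : X → PTree X Ω
  | node : Ω → List (PTree X Ω) → PTree X Ω

namespace Moerdijk

variable {X : Type u} {Ω : Type v}

/-- `ℱ(X,Ω)`: decorated planar rooted forests, i.e. the free monoid on decorated
planar rooted trees under concatenation. -/
abbrev RForest (X : Type u) (Ω : Type v) := FreeMonoid (PTree X Ω)

/-- The single-vertex forest `•ₓ` for `x ∈ X`. -/
def leafF (x : X) : RForest X Ω := FreeMonoid.of (PTree.leafX x)

/-- Grafting of a forest onto a new common root decorated by `ω`. -/
def graft (ω : Ω) (F : RForest X Ω) : RForest X Ω :=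
  FreeMonoid.of (PTree.node ω (FreeMonoid.toList F))

variable (k : Type w) [CommRing k]

/-- `H(X,Ω)`: the free `k`-module on decorated planar rooted forests, a unital
associative algebra under the concatenation product. -/
abbrev RAlg (X : Type u) (Ω : Type v) := MonoidAlgebra k (RForest X Ω)

/-- The basis element of `H(X,Ω)` corresponding to a forest `F`. -/
noncomputable def ofF (F : RForest X Ω) : RAlg k X Ω := MonoidAlgebra.of k (RForest X Ω) F

/-- The grafting operator `B⁺_ω : H(X,Ω) → H(X,Ω)` as a linear map. -/
noncomputable def Bplus (ω : Ω) : RAlg k X Ω →ₗ[k] RAlg k X Ω :=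
  MonoidAlgebra.mapDomainLinearMap k k (graft ω)

/-- The value of the coproduct `Δ_λ` on a decorated planar rooted tree:
`Δ_λ(•ₓ) = •ₓ ⊗ 1 + 1 ⊗ •ₓ + λ •ₓ ⊗ •ₓ` and
`Δ_λ(B⁺_ω(F)) = (B⁺_ω ⊗ id)Δ_λ(F) + (id ⊗ B⁺_ω)Δ_λ(F)`. -/
noncomputable def DeltaT (lam : k) : PTree X Ω → (RAlg k X Ω ⊗[k] RAlg k X Ω)
  | .leafX x =>
      ofF k (leafF x) ⊗ₜ[k] 1 + 1 ⊗ₜ[k] ofF k (leafF x)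
        + lam • (ofF k (leafF x) ⊗ₜ[k] ofF k (leafF x))
  | .node ω ts =>
      ((TensorProduct.map (Bplus k ω) LinearMap.id
        + TensorProduct.map LinearMap.id (Bplus k ω) :
          (RAlg k X Ω ⊗[k] RAlg k X Ω) →ₗ[k] (RAlg k X Ω ⊗[k] RAlg k X Ω)))
        ((ts.attach.map fun t => DeltaT lam t.1).prod)
decreasing_by
  have := List.sizeOf_lt_of_mem t.2
  simp only [PTree.node.sizeOf_spec]
  omega

/-- The value of the coproduct `Δ_λ` on a forest: `Δ_λ(T₁⋯Tₘ) = Δ_λ(T₁)⋯Δ_λ(Tₘ)`. -/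
noncomputable def DeltaF (lam : k) (F : RForest X Ω) : RAlg k X Ω ⊗[k] RAlg k X Ω :=
  ((FreeMonoid.toList F).map (DeltaT k lam)).prod

/-- The coproduct `Δ_λ : H(X,Ω) → H(X,Ω) ⊗ H(X,Ω)`. -/
noncomputable def Delta (lam : k) : RAlg k X Ω →ₗ[k] (RAlg k X Ω ⊗[k] RAlg k X Ω) :=
  (Finsupp.lsum k fun F => LinearMap.toSpanSingleton k _ (DeltaF k lam F)) ∘ₗ
    (MonoidAlgebra.coeffLinearEquiv k).toLinearMap

/-- The counit `ε : H(X,Ω) → k`, sending the empty forest to `1` and every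
nonempty forest to `0`. -/
noncomputable def eps : RAlg k X Ω →ₗ[k] k :=
  (Finsupp.lsum k fun F => LinearMap.toSpanSingleton k k
    (if (FreeMonoid.toList F).isEmpty then (1 : k) else 0)) ∘ₗ
    (MonoidAlgebra.coeffLinearEquiv k).toLinearMap

mutual
  /-- The list of subtrees of a tree, rooted at its vertices taken in the total
  order `≤_{h,r}` (preorder: roots first, then subtrees from left to right). -/
  def subT : PTree X Ω → List (PTree X Ω)
    | .leafX x => [.leafX x]
    | .node ω ts => .node ω ts :: subF ts
  /-- The list of subtrees of a forest, rooted at its vertices in the order `≤_{h,r}`. -/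
  def subF : List (PTree X Ω) → List (PTree X Ω)
    | [] => []
    | t :: ts => subT t ++ subF ts
end

/-- The vertices of a forest `F`, listed in the total order `≤_{h,r}`, each vertex
being recorded by the subtree it roots. -/
def vlist (F : RForest X Ω) : List (PTree X Ω) := subF (FreeMonoid.toList F)

/-- The number of vertices of a forest. -/
def numV (F : RForest X Ω) : ℕ := (vlist F).length

/-- The decoration of the root of a tree. -/
def rootDec : PTree X Ω → X ⊕ Ω
  | .leafX x => Sum.inl x
  | .node ω _ => Sum.inr ω

/-- The decoration of the `i`-th vertex (in the order `≤_{h,r}`) of a forest. -/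
def decorV (F : RForest X Ω) (i : Fin (numV F)) : X ⊕ Ω := rootDec ((vlist F).get i)

/-- The number of vertices of the subtree rooted at the `i`-th vertex of `F`. -/
def subSize (F : RForest X Ω) (i : Fin (numV F)) : ℕ := (subT ((vlist F).get i)).length

/-- The order `≤_h` on `V(F)`: `i ≤_h j` iff there is an oriented path from `i` to `j`,
edges being oriented from the roots towards the leaves.  In the preorder indexing, the
descendants of `i` are exactly the indices in `[i, i + subSize F i)`. -/
def leh (F : RForest X Ω) (i j : Fin (numV F)) : Prop :=
  (i : ℕ) ≤ (j : ℕ) ∧ (j : ℕ) < (i : ℕ) + subSize F i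

/-- The (reflexive) relation `≤_r` on `V(F)`: `i ≤_r j` iff `i = j`, or `i` and `j` are
not comparable for `≤_h` and `j` lies more to the right than `i` in the planar
representation of `F`. -/
def ler (F : RForest X Ω) (i j : Fin (numV F)) : Prop :=
  i = j ∨ (¬ leh F i j ∧ ¬ leh F j i ∧ i < j)

instance (F : RForest X Ω) (i j : Fin (numV F)) : Decidable (leh F i j) := by
  unfold leh; infer_instance

/-- The set `V_X(F)` of vertices of `F` decorated by an element of `X`. -/
def VXset (F : RForest X Ω) : Finset (Fin (numV F)) :=
  Finset.univ.filter fun i => (decorV F i).isLeft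

mutual
  /-- Restriction of a tree, whose vertices have preorder indices `off, off + 1, …`,
  to the set of vertices selected by `p`: each kept vertex receives an incoming edge
  from its smallest kept ancestor, if any; otherwise it becomes a root. -/
  def restT (p : ℕ → Bool) : PTree X Ω → ℕ → List (PTree X Ω)
    | .leafX x, off => if p off then [.leafX x] else []
    | .node ω ts, off =>
        if p off then [.node ω (restF p ts (off + 1))] else restF p ts (off + 1)
  /-- Restriction of a forest to the set of vertices selected by `p`. -/
  def restF (p : ℕ → Bool) : List (PTree X Ω) → ℕ → List (PTree X Ω)
    | [], _ => []
    | t :: ts, off => restT p t off ++ restF p ts (off + (subT t).length)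
end

/-- The induced subforest `F_I` of a forest `F` on a subset `I ⊆ V(F)`. -/
def indSub (F : RForest X Ω) (I : Finset (Fin (numV F))) : RForest X Ω :=
  FreeMonoid.ofList
    (restF (fun m => decide (∃ i ∈ I, (i : ℕ) = m)) (FreeMonoid.toList F) 0)

/-!
Index the vertices of a forest in preorder. The vertices of `t :: ts` are those of `t` followed
by those of `ts`, and the vertices of `B⁺_ω(F)` are its root followed by those of `F`; along
such a splitting an admissible pair `(I, J)` is a pair of admissible pairs of the pieces, and
restricting to `I` commutes with the splitting. Hence the right-hand side is multiplicative on
forests, like `Δ_λ`. On a tree `B⁺_ω(F)` the root, being decorated by `Ω`, lies in exactly one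
of `I`, `J`, which produces `(B⁺_ω ⊗ id) + (id ⊗ B⁺_ω)`; a leaf `•ₓ` may also lie in both, which
produces `λ •ₓ ⊗ •ₓ`. For `λ = 0` only the pairs with `I ∩ J = ∅`, i.e. `J = Iᶜ`, survive.
-/

lemma _root_.Finset.disjSum_union_disjSum {α β : Type*} [DecidableEq α] [DecidableEq β]
    (s₁ s₂ : Finset α) (t₁ t₂ : Finset β) :
    s₁.disjSum t₁ ∪ s₂.disjSum t₂ = (s₁ ∪ s₂).disjSum (t₁ ∪ t₂) := by
  ext (x | x) <;> simp

lemma _root_.Finset.disjSum_inter_disjSum {α β : Type*} [DecidableEq α] [DecidableEq β]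
    (s₁ s₂ : Finset α) (t₁ t₂ : Finset β) :
    s₁.disjSum t₁ ∩ s₂.disjSum t₂ = (s₁ ∩ s₂).disjSum (t₁ ∩ t₂) := by
  ext (x | x) <;> simp

section AdmissibleSum

open Finset

variable {R A : Type*} [CommSemiring R] [AddCommMonoid A] [Module R A]
  {α β γ δ : Type*} [Fintype α] [Fintype β] [Fintype γ] [Fintype δ]
  [DecidableEq α] [DecidableEq β] [DecidableEq γ] [DecidableEq δ]

def admissibleSum (lam : R) (V : Finset γ) (f : Finset γ → Finset γ → A) : A :=
  ∑ I : Finset γ, ∑ J : Finset γ,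
    if I ∪ J = univ ∧ I ∩ J ⊆ V then lam ^ #(I ∩ J) • f I J else 0

lemma admissibleSum_map_equiv (lam : R) (e : γ ≃ δ) (V : Finset γ)
    (f : Finset δ → Finset δ → A) :
    admissibleSum lam (V.map e.toEmbedding) f =
      admissibleSum lam V fun I J => f (I.map e.toEmbedding) (J.map e.toEmbedding) := by
  unfold admissibleSum
  refine (Fintype.sum_equiv e.finsetCongr _ _ fun I => ?_).symm
  refine Fintype.sum_equiv e.finsetCongr _ _ fun J => ?_
  simp only [Equiv.finsetCongr_apply, ← map_union, ← map_inter, map_subset_map, card_map,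
    ← map_univ_equiv e, map_inj]

lemma disjSum_admissible_iff (V₁ I₁ J₁ : Finset α) (V₂ I₂ J₂ : Finset β) :
    (I₁.disjSum I₂ ∪ J₁.disjSum J₂ = univ ∧ I₁.disjSum I₂ ∩ J₁.disjSum J₂ ⊆ V₁.disjSum V₂) ↔
      (I₁ ∪ J₁ = univ ∧ I₁ ∩ J₁ ⊆ V₁) ∧ (I₂ ∪ J₂ = univ ∧ I₂ ∩ J₂ ⊆ V₂) := by
  rw [disjSum_union_disjSum, disjSum_inter_disjSum, ← univ_disjSum_univ, disjSum_inj,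
    disjSum_subset, toLeft_disjSum, toRight_disjSum]
  tauto

lemma admissibleSum_disjSum (lam : R) (V₁ : Finset α) (V₂ : Finset β)
    (f : Finset (α ⊕ β) → Finset (α ⊕ β) → A) :
    admissibleSum lam (V₁.disjSum V₂) f =
      admissibleSum lam V₁ fun I₁ J₁ =>
        admissibleSum lam V₂ fun I₂ J₂ => f (I₁.disjSum I₂) (J₁.disjSum J₂) := by
  let e : Finset α × Finset β ≃ Finset (α ⊕ β) := sumEquiv.toEquiv.symm
  unfold admissibleSum
  rw [← e.sum_comp, Fintype.sum_prod_type]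
  refine sum_congr rfl fun I₁ _ => ?_
  simp_rw [← e.sum_comp, Fintype.sum_prod_type]
  rw [sum_comm]
  refine sum_congr rfl fun J₁ _ => ?_
  have he (p : Finset α × Finset β) : e p = p.1.disjSum p.2 := rfl
  simp only [he]
  simp_rw [disjSum_admissible_iff, disjSum_inter_disjSum, card_disjSum]
  by_cases h₁ : I₁ ∪ J₁ = univ ∧ I₁ ∩ J₁ ⊆ V₁
  · simp only [h₁, true_and, if_true, smul_sum, smul_ite, smul_zero, smul_smul, pow_add]
  · simp only [h₁, false_and, if_false, sum_const_zero]

lemma admissibleSum_of_isEmpty [IsEmpty γ] (lam : R) (V : Finset γ)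
    (f : Finset γ → Finset γ → A) : admissibleSum lam V f = f ∅ ∅ := by
  have h (I : Finset γ) : I = ∅ := Subsingleton.elim _ _
  simp [admissibleSum, h]

lemma admissibleSum_fin_one (lam : R) (V : Finset (Fin 1))
    (f : Finset (Fin 1) → Finset (Fin 1) → A) :
    admissibleSum lam V f = f univ ∅ + f ∅ univ + if 0 ∈ V then lam • f univ univ else 0 := by
  have : (univ : Finset (Finset (Fin 1))) = {∅, univ} := by decide
  simp [admissibleSum, this]
  abel

lemma admissibleSum_zero (V : Finset γ) (f : Finset γ → Finset γ → A) :
    admissibleSum (0 : R) V f = ∑ I, f I Iᶜ := by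
  refine sum_congr rfl fun I _ => ?_
  rw [sum_eq_single Iᶜ]
  · simp
  · rintro J - hJ
    refine ite_eq_right_iff.2 fun ⟨hcover, _⟩ => ?_
    have hmeet : (I ∩ J).Nonempty := by
      rw [nonempty_iff_ne_empty, ne_eq, ← disjoint_iff_inter_eq_empty]
      exact fun hdisj =>
        hJ (eq_compl_iff_isCompl.2 (IsCompl.symm ⟨hdisj, codisjoint_iff.2 hcover⟩))
    rw [zero_pow hmeet.card_pos.ne', zero_smul]
  · simp

lemma map_admissibleSum {B : Type*} [AddCommMonoid B] [Module R B] (φ : A →ₗ[R] B) (lam : R)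
    (V : Finset γ) (f : Finset γ → Finset γ → A) :
    φ (admissibleSum lam V f) = admissibleSum lam V fun I J => φ (f I J) := by
  simp only [admissibleSum, map_sum, apply_ite φ, map_smul, map_zero]

lemma admissibleSum_disjSum_mul {S : Type*} [Semiring S] [Algebra R S] (lam : R)
    (V₁ : Finset α) (V₂ : Finset β) (f : Finset (α ⊕ β) → Finset (α ⊕ β) → S)
    (f₁ : Finset α → Finset α → S) (f₂ : Finset β → Finset β → S)
    (hf : ∀ I₁ J₁ I₂ J₂, f (I₁.disjSum I₂) (J₁.disjSum J₂) = f₁ I₁ J₁ * f₂ I₂ J₂) :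
    admissibleSum lam (V₁.disjSum V₂) f = admissibleSum lam V₁ f₁ * admissibleSum lam V₂ f₂ := by
  simp only [admissibleSum_disjSum, hf]
  rw [← LinearMap.mulRight_apply (R := R), map_admissibleSum]
  congr 1
  funext I₁ J₁
  rw [LinearMap.mulRight_apply, ← LinearMap.mulLeft_apply (R := R), map_admissibleSum]
  rfl

end AdmissibleSum

mutual
theorem restT_congr {p q : ℕ → Bool} {t : PTree X Ω} {a b : ℕ}
    (h : ∀ j < (subT t).length, p (a + j) = q (b + j)) : restT p t a = restT q t b := by
  cases t with
  | leafX x =>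
    have hroot : p a = q b := h 0 (by simp [subT])
    simp only [restT, hroot]
  | node ω ts =>
    have hroot : p a = q b := h 0 (by simp [subT])
    have hkids : restF p ts (a + 1) = restF q ts (b + 1) :=
      restF_congr fun j hj => by
        simpa only [Nat.add_assoc, Nat.add_comm 1] using h (j + 1) (by simp [subT, hj])
    simp only [restT, hroot, hkids]
theorem restF_congr {p q : ℕ → Bool} {ts : List (PTree X Ω)} {a b : ℕ}
    (h : ∀ j < (subF ts).length, p (a + j) = q (b + j)) : restF p ts a = restF q ts b := by
  cases ts with
  | nil => simp [restF]
  | cons t ts =>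
    have hhead : restT p t a = restT q t b :=
      restT_congr fun j hj => h j (by simp [subF]; omega)
    have htail : restF p ts (a + (subT t).length) = restF q ts (b + (subT t).length) :=
      restF_congr fun j hj => by
        simpa only [Nat.add_assoc] using h ((subT t).length + j) (by simp [subF, hj])
    simp only [restF, hhead, htail]
end


section Positions

open Finset

variable {α : Type*}

def appendIndexEquiv (L₁ L₂ : List α) :
    Fin L₁.length ⊕ Fin L₂.length ≃ Fin (L₁ ++ L₂).length :=
  finSumFinEquiv.trans (finCongr List.length_append.symm)

variable (L₁ L₂ : List α)

@[simp]
lemma val_appendIndexEquiv_inl (i : Fin L₁.length) :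
    (appendIndexEquiv L₁ L₂ (.inl i) : ℕ) = i := rfl

@[simp]
lemma val_appendIndexEquiv_inr (j : Fin L₂.length) :
    (appendIndexEquiv L₁ L₂ (.inr j) : ℕ) = L₁.length + j := rfl

def posIndicator {N : ℕ} (K : Finset (Fin N)) (m : ℕ) : Bool :=
  decide (∃ i ∈ K, (i : ℕ) = m)

variable {L₁ L₂}

lemma posIndicator_append_eq_true_iff (I₁ : Finset (Fin L₁.length))
    (I₂ : Finset (Fin L₂.length)) (m : ℕ) :
    posIndicator ((I₁.disjSum I₂).map (appendIndexEquiv L₁ L₂).toEmbedding) m = true ↔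
      (∃ i ∈ I₁, (i : ℕ) = m) ∨ ∃ j ∈ I₂, L₁.length + j = m := by
  simp only [posIndicator, decide_eq_true_iff, Finset.mem_map, Equiv.coe_toEmbedding,
    Sum.exists, inl_mem_disjSum, inr_mem_disjSum, or_and_right, exists_or,
    exists_exists_and_eq_and, val_appendIndexEquiv_inl, val_appendIndexEquiv_inr]

lemma posIndicator_append_of_lt (I₁ : Finset (Fin L₁.length)) (I₂ : Finset (Fin L₂.length))
    {m : ℕ} (hm : m < L₁.length) :
    posIndicator ((I₁.disjSum I₂).map (appendIndexEquiv L₁ L₂).toEmbedding) m =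
      posIndicator I₁ m := by
  rw [Bool.eq_iff_iff, posIndicator_append_eq_true_iff, posIndicator, decide_eq_true_iff]
  exact or_iff_left_of_imp fun ⟨_, _, h⟩ => absurd h (by omega)

lemma posIndicator_append_add (I₁ : Finset (Fin L₁.length)) (I₂ : Finset (Fin L₂.length))
    (m : ℕ) :
    posIndicator ((I₁.disjSum I₂).map (appendIndexEquiv L₁ L₂).toEmbedding) (L₁.length + m) =
      posIndicator I₂ m := by
  rw [Bool.eq_iff_iff, posIndicator_append_eq_true_iff, posIndicator, decide_eq_true_iff]
  simp only [Nat.add_left_cancel_iff]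
  exact or_iff_right_of_imp fun ⟨i, _, h⟩ => absurd h (by omega)

end Positions

def xVertices (L : List (PTree X Ω)) : Finset (Fin L.length) :=
  Finset.univ.filter fun i => (rootDec (L.get i)).isLeft

lemma xVertices_append (L₁ L₂ : List (PTree X Ω)) :
    xVertices (L₁ ++ L₂) =
      ((xVertices L₁).disjSum (xVertices L₂)).map (appendIndexEquiv L₁ L₂).toEmbedding := by
  ext i
  obtain ⟨s | s, rfl⟩ := (appendIndexEquiv L₁ L₂).surjective i <;>
    simp [xVertices]

lemma restF_cons_map_disjSum (t : PTree X Ω) (ts : List (PTree X Ω))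
    (I₁ : Finset (Fin (subT t).length)) (I₂ : Finset (Fin (subF ts).length)) :
    restF (posIndicator ((I₁.disjSum I₂).map (appendIndexEquiv _ _).toEmbedding)) (t :: ts) 0 =
      restT (posIndicator I₁) t 0 ++ restF (posIndicator I₂) ts 0 := by
  rw [restF]
  congr 1
  · exact restT_congr fun j hj => by
      simpa only [Nat.zero_add] using posIndicator_append_of_lt I₁ I₂ hj
  · exact restF_congr fun j _ => by
      simpa only [Nat.zero_add] using posIndicator_append_add I₁ I₂ j

lemma restT_node_map_disjSum (ω : Ω) (ss : List (PTree X Ω))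
    (R : Finset (Fin [PTree.node ω ss].length)) (I : Finset (Fin (subF ss).length)) :
    restT (posIndicator ((R.disjSum I).map (appendIndexEquiv _ _).toEmbedding)) (.node ω ss) 0 =
      if posIndicator R 0 then [.node ω (restF (posIndicator I) ss 0)]
      else restF (posIndicator I) ss 0 := by
  have hkids : restF (posIndicator ((R.disjSum I).map (appendIndexEquiv _ _).toEmbedding)) ss
      (0 + 1) = restF (posIndicator I) ss 0 :=
    restF_congr fun j _ => by
      simpa only [Nat.zero_add, List.length_singleton] using posIndicator_append_add R I j
  rw [restT, posIndicator_append_of_lt R I (by simp), hkids]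

lemma ofF_mul (F G : RForest X Ω) : ofF k (F * G) = ofF k F * ofF k G :=
  map_mul (MonoidAlgebra.of k (RForest X Ω)) F G

lemma ofF_one : ofF k (1 : RForest X Ω) = 1 :=
  map_one (MonoidAlgebra.of k (RForest X Ω))

lemma bplus_ofF (ω : Ω) (F : RForest X Ω) : Bplus k ω (ofF k F) = ofF k (graft ω F) :=
  MonoidAlgebra.mapDomainLinearMap_single _ _ _

/-- The right-hand side of the formula for a forest with preorder vertex list `L` whose
restriction to the positions selected by `p` is `r p`. For `r p := restF p (toList F) 0` it is
the sum in the theorem, since `indSub F I` selects the positions of `I` by `posIndicator I`. -/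
noncomputable def restrictionSum (lam : k) (L : List (PTree X Ω))
    (r : (ℕ → Bool) → List (PTree X Ω)) : RAlg k X Ω ⊗[k] RAlg k X Ω :=
  admissibleSum lam (xVertices L) fun I J =>
    ofF k (FreeMonoid.ofList (r (posIndicator I))) ⊗ₜ[k]
      ofF k (FreeMonoid.ofList (r (posIndicator J)))

section RestrictionSum

variable (lam : k)

lemma restrictionSum_nil :
    restrictionSum k lam (subF []) (restF · ([] : List (PTree X Ω)) 0) = 1 := by
  refine (admissibleSum_of_isEmpty (γ := Fin 0) _ _ _).trans ?_
  exact congrArg₂ _ (ofF_one k) (ofF_one k)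

lemma restrictionSum_cons (t : PTree X Ω) (ts : List (PTree X Ω)) :
    restrictionSum k lam (subT t ++ subF ts) (restF · (t :: ts) 0) =
      restrictionSum k lam (subT t) (restT · t 0) *
        restrictionSum k lam (subF ts) (restF · ts 0) := by
  rw [restrictionSum, xVertices_append, admissibleSum_map_equiv]
  refine admissibleSum_disjSum_mul _ _ _ _ _ _ fun I₁ J₁ I₂ J₂ => ?_
  simp only [restF_cons_map_disjSum, FreeMonoid.ofList_append, ofF_mul,
    Algebra.TensorProduct.tmul_mul_tmul]

lemma restrictionSum_leaf (x : X) :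
    restrictionSum k lam [.leafX x] (restT · (.leafX x : PTree X Ω) 0) =
      ofF k (leafF x) ⊗ₜ[k] 1 + 1 ⊗ₜ[k] ofF k (leafF x)
        + lam • (ofF k (leafF x) ⊗ₜ[k] ofF k (leafF x)) := by
  refine (admissibleSum_fin_one (V := xVertices [.leafX x]) _ _).trans ?_
  simp [xVertices, rootDec, restT, posIndicator, ofF_one, leafF]

lemma restrictionSum_node (ω : Ω) (ss : List (PTree X Ω)) :
    restrictionSum k lam ([.node ω ss] ++ subF ss) (restT · (.node ω ss) 0) =
      (TensorProduct.map (Bplus k ω) LinearMap.id + TensorProduct.map LinearMap.id (Bplus k ω) :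
        RAlg k X Ω ⊗[k] RAlg k X Ω →ₗ[k] RAlg k X Ω ⊗[k] RAlg k X Ω)
        (restrictionSum k lam (subF ss) (restF · ss 0)) := by
  rw [restrictionSum, xVertices_append, admissibleSum_map_equiv, admissibleSum_disjSum]
  simp only [restT_node_map_disjSum]
  refine (admissibleSum_fin_one (V := xVertices [.node ω ss]) _ _).trans ?_
  have hroot : (0 : Fin 1) ∉ xVertices [PTree.node ω ss] := by simp [xVertices, rootDec]
  simp [posIndicator, hroot, restrictionSum, map_admissibleSum, bplus_ofF, graft]

mutual
theorem deltaT_eq_restrictionSum (t : PTree X Ω) :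
    DeltaT k lam t = restrictionSum k lam (subT t) (restT · t 0) := by
  cases t with
  | leafX x =>
    rw [DeltaT]
    exact (restrictionSum_leaf k lam x).symm
  | node ω ss =>
    rw [DeltaT, List.attach_map_val, prod_deltaT_eq_restrictionSum ss]
    exact (restrictionSum_node k lam ω ss).symm
theorem prod_deltaT_eq_restrictionSum (ts : List (PTree X Ω)) :
    (ts.map (DeltaT k lam)).prod = restrictionSum k lam (subF ts) (restF · ts 0) := by
  cases ts with
  | nil => exact (restrictionSum_nil k lam).symm
  | cons t ts =>
    rw [List.map_cons, List.prod_cons, deltaT_eq_restrictionSum t,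
      prod_deltaT_eq_restrictionSum ts]
    exact (restrictionSum_cons k lam t ts).symm
end

lemma delta_ofF (F : RForest X Ω) : Delta k lam (ofF k F) = DeltaF k lam F := by
  simp [Delta, ofF]

end RestrictionSum

/-- Combinatorial description of the coproduct:
`Δ_λ(F) = Σ_{I ∪ J = V(F), I ∩ J ⊆ V_X(F)} λ^{|I∩J|} F_I ⊗ F_J`, and in
particular `Δ₀(F) = Σ_{I ⊆ V(F)} F_I ⊗ F_{V(F)∖I}`. -/
theorem Delta_combinatorial [Nonempty Ω] (lam : k) (F : RForest X Ω) :
    (Delta k lam (ofF k F) =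
      ∑ I : Finset (Fin (numV F)), ∑ J : Finset (Fin (numV F)),
        if I ∪ J = Finset.univ ∧ I ∩ J ⊆ VXset F then
          lam ^ (I ∩ J).card • (ofF k (indSub F I) ⊗ₜ[k] ofF k (indSub F J))
        else 0) ∧
    (Delta k (0 : k) (ofF k F) =
      ∑ I : Finset (Fin (numV F)), ofF k (indSub F I) ⊗ₜ[k] ofF k (indSub F Iᶜ)) := by
  have key (μ : k) : Delta k μ (ofF k F) =
      admissibleSum μ (VXset F) fun I J => ofF k (indSub F I) ⊗ₜ[k] ofF k (indSub F J) :=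
    (delta_ofF k μ F).trans (prod_deltaT_eq_restrictionSum k μ _)
  exact ⟨key lam, (key 0).trans (admissibleSum_zero _ _)⟩

end Moerdijk
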